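/- For every real γ > 0 and every φ ∈ ℝ, ∫₀^∞ (γ·r/π)·e^{−γ·(r² − 2r·cos φ + 1)} dr = (1/(2π))·e^{−γ} + (1/2)·√(γ/π)·e^{−γ·sin²φ}·cos φ·(1 + erf(√γ·cos φ)). -/

import Mathlib

/-!
Completing the square, `r² - 2r cos φ + 1 = (r - cos φ)² + sin² φ`, reduces the integral to
`∫₀^∞ r e^{-γ (r - c)²} dr` with `c = cos φ`. Shifting `u = r - c` splits it into
`∫_{-c}^∞ u e^{-γu²} du = e^{-γc²}/(2γ)` and `c ∫_{-c}^∞ e^{-γu²} du`, a half Gaussian integral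
plus a Gaussian integral over `[0, c]`, which is a multiple of `erf (√γ c)`.
-/

open Real MeasureTheory

/-- The Gaussian error function. -/
noncomputable def erf (u : ℝ) : ℝ := (2 / Real.sqrt π) * ∫ t in (0:ℝ)..u, Real.exp (-t ^ 2)

open Filter Topology Set

theorem erf_neg (u : ℝ) : erf (-u) = -erf u := by
  have h := intervalIntegral.integral_comp_neg (a := 0) (b := u) (fun t => exp (-t ^ 2))
  simp only [neg_sq, neg_zero] at h
  rw [erf, erf, intervalIntegral.integral_symm (-u) 0, ← h, mul_neg]

theorem integral_exp_neg_mul_sq_eq_erf {a : ℝ} (ha : 0 < a) (x : ℝ) :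
    ∫ t in (0 : ℝ)..x, exp (-a * t ^ 2) = √(π / a) / 2 * erf (√a * x) := by
  have hsa : √a ≠ 0 := (sqrt_pos.mpr ha).ne'
  have hscale := intervalIntegral.integral_comp_mul_left (a := 0) (b := x)
    (fun y => exp (-y ^ 2)) hsa
  simp only [mul_pow, sq_sqrt ha.le, mul_zero, smul_eq_mul, neg_mul] at hscale ⊢
  rw [hscale, erf, sqrt_div pi_pos.le]
  field_simp

theorem hasDerivAt_integral_exp_neg_mul_sq (a x : ℝ) :
    HasDerivAt (fun y => ∫ t in (0 : ℝ)..y, exp (-a * t ^ 2)) (exp (-a * x ^ 2)) x := by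
  have hcont : Continuous fun t : ℝ => exp (-a * t ^ 2) := by fun_prop
  exact intervalIntegral.integral_hasDerivAt_right (hcont.intervalIntegrable _ _)
    (hcont.stronglyMeasurableAtFilter _ _) hcont.continuousAt

noncomputable def mulExpNegMulSubSqPrimitive (a c r : ℝ) : ℝ :=
  -exp (-a * (r - c) ^ 2) / (2 * a) + c * ∫ t in (0 : ℝ)..(r - c), exp (-a * t ^ 2)

section ShiftedGaussian

variable {a : ℝ} (c : ℝ)

theorem hasDerivAt_mulExpNegMulSubSqPrimitive (ha : a ≠ 0) (r : ℝ) :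
    HasDerivAt (mulExpNegMulSubSqPrimitive a c) (r * exp (-a * (r - c) ^ 2)) r := by
  have hshift : HasDerivAt (fun r : ℝ => r - c) 1 r := (hasDerivAt_id r).sub_const c
  have hexp : HasDerivAt (fun r => exp (-a * (r - c) ^ 2))
      (exp (-a * (r - c) ^ 2) * (-a * (2 * (r - c)))) r := by
    simpa using ((hshift.pow 2).const_mul (-a)).exp
  have hint := (hasDerivAt_integral_exp_neg_mul_sq a (r - c)).comp r hshift
  refine ((hexp.neg.div_const (2 * a)).add (hint.const_mul c)).congr_deriv ?_
  field_simp
  ring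

theorem tendsto_mulExpNegMulSubSqPrimitive_atTop (ha : 0 < a) :
    Tendsto (mulExpNegMulSubSqPrimitive a c) atTop (𝓝 (c * (√(π / a) / 2))) := by
  have hshift : Tendsto (fun r : ℝ => r - c) atTop atTop :=
    tendsto_atTop_add_const_right _ _ tendsto_id
  have hexp : Tendsto (fun r : ℝ => exp (-a * (r - c) ^ 2)) atTop (𝓝 0) :=
    tendsto_exp_atBot.comp <|
      ((tendsto_pow_atTop two_ne_zero).comp hshift).const_mul_atTop_of_neg (neg_lt_zero.mpr ha)
  have hint : Tendsto (fun r : ℝ => ∫ t in (0 : ℝ)..(r - c), exp (-a * t ^ 2)) atTop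
      (𝓝 (√(π / a) / 2)) := by
    rw [← integral_gaussian_Ioi a]
    exact intervalIntegral_tendsto_integral_Ioi 0 (integrable_exp_neg_mul_sq ha).integrableOn hshift
  have h := (hexp.neg.div_const (2 * a)).add (hint.const_mul c)
  rwa [neg_zero, zero_div, zero_add] at h

theorem integral_Ioi_mul_exp_neg_mul_sub_sq (ha : 0 < a) :
    ∫ r in Ioi (0 : ℝ), r * exp (-a * (r - c) ^ 2)
      = exp (-a * c ^ 2) / (2 * a) + c * (√(π / a) / 2) * (1 + erf (√a * c)) := by
  have hnonneg : ∀ r ∈ Ioi (0 : ℝ), 0 ≤ r * exp (-a * (r - c) ^ 2) := fun r hr =>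
    mul_nonneg hr.le (exp_pos _).le
  rw [integral_Ioi_of_hasDerivAt_of_nonneg'
    (fun r _ => hasDerivAt_mulExpNegMulSubSqPrimitive c ha.ne' r) hnonneg
    (tendsto_mulExpNegMulSubSqPrimitive_atTop c ha), mulExpNegMulSubSqPrimitive,
    integral_exp_neg_mul_sq_eq_erf ha, zero_sub, mul_neg, erf_neg, neg_sq]
  ring

end ShiftedGaussian

theorem stmt_18 (γ φ : ℝ) (hγ : 0 < γ) :
    ∫ r in Set.Ioi (0 : ℝ), (γ * r / π) * Real.exp (-γ * (r ^ 2 - 2 * r * Real.cos φ + 1))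
      = (1 / (2 * π)) * Real.exp (-γ)
        + (1 / 2) * Real.sqrt (γ / π) * Real.exp (-γ * Real.sin φ ^ 2) * Real.cos φ *
          (1 + erf (Real.sqrt γ * Real.cos φ)) := by
  have hcomplete : ∀ r : ℝ, (γ * r / π) * exp (-γ * (r ^ 2 - 2 * r * cos φ + 1))
      = γ / π * exp (-γ * sin φ ^ 2) * (r * exp (-γ * (r - cos φ) ^ 2)) := by
    intro r
    have hsquare :
        -γ * (r ^ 2 - 2 * r * cos φ + 1) = -γ * sin φ ^ 2 + -γ * (r - cos φ) ^ 2 := by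
      linear_combination γ * sin_sq_add_cos_sq φ
    rw [hsquare, exp_add]
    ring
  have hexp : exp (-γ) = exp (-γ * sin φ ^ 2) * exp (-γ * cos φ ^ 2) := by
    rw [← exp_add]
    congr 1
    linear_combination γ * sin_sq_add_cos_sq φ
  have hsqrt : γ / π * √(π / γ) = √(γ / π) := by
    have hq : 0 ≤ γ / π := (div_pos hγ pi_pos).le
    rw [← sqrt_sq hq, ← sqrt_mul (sq_nonneg _), sqrt_sq hq]
    congr 1
    field_simp
  simp_rw [hcomplete]
  rw [integral_const_mul, integral_Ioi_mul_exp_neg_mul_sub_sq _ hγ, hexp, ← hsqrt]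
  field_simp
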